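/- arXiv:math/0412095 — 3 statements merged into one kernel-verified Lean document; each statement's English description precedes it below -/
import Mathlib

section
/- Let J be a model structure on ℂⁿ with complexification having nonzero entries only L̃_{2n−1,k}(z, z̄) = Σ_{l≠k} (α_l^k z^l + β_l^k z̄^l) in the last two rows. A complex vector field X = Σ_k (x_k ∂/∂z^k + y_k ∂/∂z̄^k) is of type (0,1) for J (i.e. J_ℂ X = −iX) if and only if x_k = 0 for k = 1,…,n−1 and x_n = (i/2) Σ_{k=1}^{n−1} y_k L̃_{2n−1,k}. -/
open Complex BigOperators

/-- The entry `L̃_{2n-1,k}(z,z̄) = Σ_{l ≠ k} (α_l^k z^l + β_l^k conj(z^l))` of the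
complexified model structure. -/
noncomputable def Ltilde (n : ℕ) (α β : Fin n → Fin n → ℂ) (k : Fin n) (z : Fin n → ℂ) : ℂ :=
  ∑ l : Fin n, if l = k ∨ (l : ℕ) + 1 = n then 0
    else (α l k * z l + β l k * (starRingEnd ℂ) (z l))

/-- for a model structure `J` on `ℂⁿ`, a complex vector field
`X = Σ_k (x_k ∂/∂z^k + y_k ∂/∂z̄^k)` satisfies `J_ℂ X = -i X` (i.e. is of type `(0,1)`)
iff `x_k = 0` for `k = 1,…,n-1` and `x_n = (i/2) Σ_{k<n} y_k L̃_{2n-1,k}`.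
Here `Jx, Jy` are the `∂/∂z`- and `∂/∂z̄`-components of `J_ℂ X`, computed from the
complexified matrix of the model structure. -/
theorem stmt2 (n : ℕ) (hn : 1 ≤ n) (α β : Fin n → Fin n → ℂ)
    (z : Fin n → ℂ) (x y : Fin n → ℂ)
    (Jx Jy : Fin n → ℂ)
    (hJx : ∀ k : Fin n, Jx k =
      (if (k : ℕ) + 1 = n
        then Complex.I * x k +
          ∑ j : Fin n, (if (j : ℕ) + 1 = n then 0 else Ltilde n α β j z * y j)
        else Complex.I * x k))
    (hJy : ∀ k : Fin n, Jy k = -Complex.I * y k) :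
    ((∀ k, Jx k = -Complex.I * x k) ∧ (∀ k, Jy k = -Complex.I * y k)) ↔
      ((∀ k : Fin n, (k : ℕ) + 1 < n → x k = 0) ∧
        x ⟨n - 1, by omega⟩ =
          (Complex.I / 2) *
            ∑ k : Fin n, (if (k : ℕ) + 1 = n then 0 else y k * Ltilde n α β k z)) := by
  have hsum : (∑ j : Fin n, (if (j : ℕ) + 1 = n then 0 else Ltilde n α β j z * y j))
      = ∑ k : Fin n, (if (k : ℕ) + 1 = n then 0 else y k * Ltilde n α β k z) := by
    apply Finset.sum_congr rfl
    intro j _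
    split <;> ring
  set S := ∑ k : Fin n, (if (k : ℕ) + 1 = n then 0 else y k * Ltilde n α β k z) with hS
  have hlast : ((⟨n - 1, by omega⟩ : Fin n) : ℕ) + 1 = n := by simp; omega
  constructor
  · rintro ⟨h1, _⟩
    constructor
    · intro k hk
      have := h1 k
      rw [hJx k, if_neg (by omega)] at this
      have : (Complex.I + Complex.I) * x k = 0 := by linear_combination this
      have hI : Complex.I + Complex.I ≠ 0 := by
        simp [Complex.ext_iff]
      exact (mul_eq_zero.mp this).resolve_left hI
    · have := h1 ⟨n - 1, by omega⟩
      rw [hJx _, if_pos hlast, hsum] at this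
      have h2 : (Complex.I + Complex.I) * x ⟨n - 1, by omega⟩ = -S := by
        linear_combination this
      linear_combination (-Complex.I/2) * h2 + x ⟨n - 1, by omega⟩ * Complex.I_sq
  · rintro ⟨h1, h2⟩
    refine ⟨fun k => ?_, hJy⟩
    rw [hJx k]
    by_cases hk : (k : ℕ) + 1 = n
    · rw [if_pos hk, hsum]
      have hkeq : k = ⟨n - 1, by omega⟩ := by
        ext; omega
      rw [hkeq, h2]
      linear_combination S * Complex.I_sq
    · rw [if_neg hk]
      rw [h1 k (by omega)]
      ring
end

section
/- Let J be a model structure on ℂⁿ with associated functions L̃_{2n−1,k}. Then J is integrable (its Nijenhuis tensor vanishes) if and only if the compatibility conditions ∂L̃_{2n−1,k}/∂z̄^j = ∂L̃_{2n−1,j}/∂z̄^k hold for all 1 ≤ j,k ≤ n−1. -/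
/-!
Write `J = J_st + L(z)`, with `L` real bilinear in `(z, v)`. Its values lie in the last coordinate
line, which it annihilates in both arguments, so `L ∘ L = 0` and on constant fields
`N(u, v) = L(iu) v - L(iv) u + i (L v u - L u v)`. The holomorphic coefficients `α` cancel in
`L(iu) - i L(u)`, leaving `N(u, v)_n = 2i (b(v̄, ū) - b(ū, v̄))`, where `b` is the bilinear form of
the matrix of antilinear coefficients `β_{jk}` (`j ≠ k`, both among the first `n - 1` indices).
Thus `N ≡ 0` iff this matrix is symmetric, and its entries are exactly `∂L̃_{2n-1,k}/∂z̄^j`.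
-/

open Complex BigOperators

/-- The model almost complex structure on `ℂⁿ ≅ ℝ^{2n}`, written in complex
coordinates as a field of ℝ-linear endomorphisms of `ℂⁿ`:
`(Jv)_k = i v_k` for `k < n`, and `(Jv)_n = i v_n + Σ_{j<n} L̃_{2n-1,j}(z) conj(v_j)`. -/
noncomputable def modelJ (n : ℕ) (α β : Fin n → Fin n → ℂ)
    (z : Fin n → ℂ) (v : Fin n → ℂ) : Fin n → ℂ := fun k =>
  if (k : ℕ) + 1 = n then
    Complex.I * v k +
      ∑ j : Fin n, (if (j : ℕ) + 1 = n then 0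
        else Ltilde n α β j z * (starRingEnd ℂ) (v j))
  else Complex.I * v k

/-- Lie bracket of two vector fields on `ℂⁿ` (viewed as a real vector space). -/
noncomputable def brkt {n : ℕ} (X Y : (Fin n → ℂ) → (Fin n → ℂ)) (p : Fin n → ℂ) :
    Fin n → ℂ :=
  fderiv ℝ Y p (X p) - fderiv ℝ X p (Y p)

/-- The Nijenhuis tensor `N(u,v) = [Ju,Jv] - J[Ju,v] - J[u,Jv] - [u,v]` of an almost
complex structure `J` on `ℂⁿ`, evaluated on constant vector fields `u, v` at `p`
(the Nijenhuis tensor is tensorial, so constant fields suffice). -/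
noncomputable def nijenhuis {n : ℕ} (J : (Fin n → ℂ) → (Fin n → ℂ) → (Fin n → ℂ))
    (u v : Fin n → ℂ) (p : Fin n → ℂ) : Fin n → ℂ :=
  brkt (fun q => J q u) (fun q => J q v) p
    - J p (brkt (fun q => J q u) (fun _ => v) p)
    - J p (brkt (fun _ => u) (fun q => J q v) p)
    - brkt (fun _ => u) (fun _ => v) p

/-- The Wirtinger derivative `∂f/∂z̄^j = ½(∂f/∂x^j + i ∂f/∂y^j)` of `f : ℂⁿ → ℂ`. -/
noncomputable def dbar (n : ℕ) (f : (Fin n → ℂ) → ℂ) (j : Fin n) (z : Fin n → ℂ) : ℂ :=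
  (1 / 2 : ℂ) * (fderiv ℝ f z (Pi.single j 1) +
    Complex.I * fderiv ℝ f z (Pi.single j Complex.I))

open Matrix

lemma LinearMap.fderiv_apply {E F : Type*} [NormedAddCommGroup E] [NormedSpace ℝ E]
    [FiniteDimensional ℝ E] [NormedAddCommGroup F] [NormedSpace ℝ F] (f : E →ₗ[ℝ] F) (p x : E) :
    fderiv ℝ f p x = f x := by
  rw [← LinearMap.coe_toContinuousLinearMap' f, ContinuousLinearMap.fderiv]

section AffineStructure

variable {n : ℕ}

lemma brkt_of_affine {X Y : (Fin n → ℂ) → Fin n → ℂ} {a b : Fin n → ℂ}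
    {f g : (Fin n → ℂ) →ₗ[ℝ] (Fin n → ℂ)} (hX : ∀ q, X q = a + f q) (hY : ∀ q, Y q = b + g q)
    (p : Fin n → ℂ) : brkt X Y p = g (X p) - f (Y p) := by
  have hX' : X = fun q => a + f q := funext hX
  have hY' : Y = fun q => b + g q := funext hY
  simp only [brkt, hX', hY', fderiv_const_add, LinearMap.fderiv_apply]

theorem nijenhuis_eq_of_affine {J₀ : (Fin n → ℂ) →ₗ[ℝ] (Fin n → ℂ)}
    {L : (Fin n → ℂ) →ₗ[ℝ] (Fin n → ℂ) →ₗ[ℝ] (Fin n → ℂ)}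
    {J : (Fin n → ℂ) → (Fin n → ℂ) → (Fin n → ℂ)} (hJ : ∀ q w, J q w = J₀ w + L q w)
    (hL_left : ∀ p q w, L (L q w) p = 0) (hL_right : ∀ p q w, L p (L q w) = 0)
    (u v p : Fin n → ℂ) :
    nijenhuis J u v p = L (J₀ u) v - L (J₀ v) u + J₀ (L v u - L u v) := by
  have hu : ∀ q, J q u = J₀ u + L.flip u q := fun q => hJ q u
  have hv : ∀ q, J q v = J₀ v + L.flip v q := fun q => hJ q v
  have hconst : ∀ w q : Fin n → ℂ, (fun _ => w) q = w + (0 : (Fin n → ℂ) →ₗ[ℝ] _) q :=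
    fun w _ => (add_zero w).symm
  rw [nijenhuis, brkt_of_affine hu hv, brkt_of_affine hu (hconst v), brkt_of_affine (hconst u) hv,
    brkt_of_affine (hconst u) (hconst v)]
  simp only [hJ, LinearMap.flip_apply, LinearMap.zero_apply, map_add, map_sub, map_zero,
    hL_left, hL_right]
  abel

end AffineStructure

section ModelStructure

variable (n : ℕ) (α β : Fin n → Fin n → ℂ)

noncomputable def LtildeLinear (k : Fin n) : (Fin n → ℂ) →ₗ[ℝ] ℂ where
  toFun := Ltilde n α β k
  map_add' x y := by
    simp only [Ltilde, ← Finset.sum_add_distrib]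
    refine Finset.sum_congr rfl fun l _ => ?_
    split_ifs
    · simp
    · simp only [Pi.add_apply, map_add]; ring
  map_smul' r x := by
    simp only [Ltilde, RingHom.id_apply, Finset.smul_sum]
    refine Finset.sum_congr rfl fun l _ => ?_
    split_ifs
    · simp
    · simp only [Pi.smul_apply, Complex.real_smul, map_mul, Complex.conj_ofReal]; ring

lemma coe_LtildeLinear (k : Fin n) : ⇑(LtildeLinear n α β k) = Ltilde n α β k := rfl

noncomputable def modelL : (Fin n → ℂ) →ₗ[ℝ] (Fin n → ℂ) →ₗ[ℝ] (Fin n → ℂ) :=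
  LinearMap.mk₂ ℝ (fun q v k => if (k : ℕ) + 1 = n then
      ∑ j : Fin n, (if (j : ℕ) + 1 = n then 0 else Ltilde n α β j q * (starRingEnd ℂ) (v j))
    else 0)
    (fun q q' v => by
      funext k
      simp only [Pi.add_apply, ite_add_ite, ← Finset.sum_add_distrib, add_zero]
      simp [← coe_LtildeLinear, add_mul])
    (fun r q v => by
      funext k
      simp only [Pi.smul_apply, smul_ite, smul_zero, Finset.smul_sum]
      simp [← coe_LtildeLinear, mul_assoc])
    (fun q v v' => by
      funext k
      simp only [Pi.add_apply, ite_add_ite, ← Finset.sum_add_distrib, add_zero]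
      simp [mul_add])
    (fun r q v => by
      funext k
      simp only [Pi.smul_apply, smul_ite, smul_zero, Finset.smul_sum]
      simp [mul_left_comm])

lemma modelL_apply (q v : Fin n → ℂ) (k : Fin n) :
    modelL n α β q v k = if (k : ℕ) + 1 = n then
      ∑ j : Fin n, (if (j : ℕ) + 1 = n then 0 else Ltilde n α β j q * (starRingEnd ℂ) (v j))
    else 0 := rfl

lemma modelJ_eq_add (q w : Fin n → ℂ) :
    modelJ n α β q w = (Complex.I • LinearMap.id : (Fin n → ℂ) →ₗ[ℝ] _) w + modelL n α β q w := by
  funext k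
  simp only [modelJ, modelL_apply, LinearMap.smul_apply, LinearMap.id_apply, Pi.add_apply,
    Pi.smul_apply, smul_eq_mul]
  split_ifs <;> simp

lemma modelL_apply_of_ne {k : Fin n} (hk : (k : ℕ) + 1 ≠ n) (q v : Fin n → ℂ) :
    modelL n α β q v k = 0 :=
  if_neg hk

lemma Ltilde_eq_zero_of_forall_ne {q : Fin n → ℂ} (hq : ∀ l : Fin n, (l : ℕ) + 1 ≠ n → q l = 0)
    (k : Fin n) : Ltilde n α β k q = 0 := by
  refine Finset.sum_eq_zero fun l _ => ?_
  split_ifs with h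
  · rfl
  · rw [hq l (not_or.mp h).2]
    simp

lemma modelL_modelL (p q w : Fin n → ℂ) : modelL n α β (modelL n α β q w) p = 0 := by
  funext k
  simp [modelL_apply,
    Ltilde_eq_zero_of_forall_ne n α β fun l hl => modelL_apply_of_ne n α β hl q w]

lemma modelL_apply_modelL (p q w : Fin n → ℂ) : modelL n α β p (modelL n α β q w) = 0 := by
  funext k
  simp +contextual [modelL_apply (v := modelL n α β q w), modelL_apply_of_ne]

def betaMatrix : Matrix (Fin n) (Fin n) ℂ :=
  Matrix.of fun l j => if l = j ∨ (l : ℕ) + 1 = n ∨ (j : ℕ) + 1 = n then 0 else β l j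

lemma Ltilde_I_smul_sub {j : Fin n} (hj : (j : ℕ) + 1 ≠ n) (u : Fin n → ℂ) :
    Ltilde n α β j (Complex.I • u) - Complex.I * Ltilde n α β j u
      = -2 * Complex.I * (star u ᵥ* betaMatrix n β) j := by
  simp only [Ltilde, vecMul, dotProduct, betaMatrix, Matrix.of_apply, Finset.mul_sum,
    ← Finset.sum_sub_distrib]
  refine Finset.sum_congr rfl fun l _ => ?_
  by_cases hl : l = j ∨ (l : ℕ) + 1 = n
  · simp only [if_pos hl, if_pos (show l = j ∨ (l : ℕ) + 1 = n ∨ (j : ℕ) + 1 = n by tauto)]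
    simp
  · simp only [if_neg hl, if_neg (show ¬(l = j ∨ (l : ℕ) + 1 = n ∨ (j : ℕ) + 1 = n) by tauto),
      Pi.smul_apply, smul_eq_mul, map_mul, Complex.conj_I, Pi.star_apply,
      Complex.star_def]
    ring

lemma vecMul_betaMatrix_of_eq {j : Fin n} (hj : (j : ℕ) + 1 = n) (x : Fin n → ℂ) :
    (x ᵥ* betaMatrix n β) j = 0 := by
  simp [vecMul, dotProduct, betaMatrix, hj]

lemma modelL_I_smul_sub {k : Fin n} (hk : (k : ℕ) + 1 = n) (u v : Fin n → ℂ) :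
    modelL n α β (Complex.I • u) v k - Complex.I * modelL n α β u v k
      = -2 * Complex.I * (betaMatrix n β).toBilin' (star u) (star v) := by
  rw [Matrix.toBilin'_apply', dotProduct_mulVec]
  simp only [modelL_apply, if_pos hk, dotProduct, Finset.mul_sum, ← Finset.sum_sub_distrib]
  refine Finset.sum_congr rfl fun j _ => ?_
  by_cases hj : (j : ℕ) + 1 = n
  · simp [hj, vecMul_betaMatrix_of_eq n β hj]
  · rw [if_neg hj, if_neg hj, ← mul_assoc, ← mul_sub_right_distrib, Ltilde_I_smul_sub n α β hj]
    simp only [Pi.star_apply, Complex.star_def]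
    ring

lemma nijenhuis_modelJ_apply (u v p : Fin n → ℂ) (k : Fin n) :
    nijenhuis (modelJ n α β) u v p k = if (k : ℕ) + 1 = n then
      2 * Complex.I * ((betaMatrix n β).toBilin' (star v) (star u)
        - (betaMatrix n β).toBilin' (star u) (star v))
    else 0 := by
  rw [nijenhuis_eq_of_affine (modelJ_eq_add n α β) (modelL_modelL n α β)
    (modelL_apply_modelL n α β)]
  simp only [LinearMap.smul_apply, LinearMap.id_apply, Pi.add_apply, Pi.sub_apply,
    Pi.smul_apply, smul_eq_mul]
  split_ifs with hk
  · linear_combination modelL_I_smul_sub n α β hk u v - modelL_I_smul_sub n α β hk v u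
  · simp [modelL_apply_of_ne n α β hk]

lemma forall_nijenhuis_modelJ_eq_zero_iff (hn : 1 ≤ n) :
    (∀ u v p : Fin n → ℂ, nijenhuis (modelJ n α β) u v p = 0)
      ↔ (betaMatrix n β).toBilin'.IsSymm := by
  rw [LinearMap.BilinForm.isSymm_def]
  constructor
  · intro h x y
    have hlast := congrFun (h (star x) (star y) 0) ⟨n - 1, by omega⟩
    rw [nijenhuis_modelJ_apply, if_pos (by simp only; omega), star_star, star_star,
      Pi.zero_apply] at hlast
    have hI : (2 : ℂ) * Complex.I ≠ 0 := by simp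
    exact (sub_eq_zero.mp ((mul_eq_zero.mp hlast).resolve_left hI)).symm
  · intro h u v p
    funext k
    simp [nijenhuis_modelJ_apply, h (star v)]

lemma Ltilde_single (k j : Fin n) (c : ℂ) :
    Ltilde n α β k (Pi.single j c)
      = if j = k ∨ (j : ℕ) + 1 = n then 0 else α j k * c + β j k * (starRingEnd ℂ) c := by
  rw [Ltilde, Finset.sum_eq_single j (fun l _ hl => by simp [Pi.single_eq_of_ne hl])
    (by simp), Pi.single_eq_same]

lemma dbar_Ltilde {k : Fin n} (hk : (k : ℕ) + 1 ≠ n) (j : Fin n) (z : Fin n → ℂ) :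
    dbar n (Ltilde n α β k) j z = betaMatrix n β j k := by
  rw [dbar, ← coe_LtildeLinear, LinearMap.fderiv_apply, LinearMap.fderiv_apply, coe_LtildeLinear,
    Ltilde_single, Ltilde_single, betaMatrix, Matrix.of_apply]
  split_ifs
  · simp
  · tauto
  · tauto
  · simp only [map_one, Complex.conj_I]
    linear_combination (α j k - β j k) / 2 * Complex.I_mul_I

lemma isSymm_betaMatrix_iff :
    (betaMatrix n β).IsSymm ↔ ∀ (j k : Fin n) (z : Fin n → ℂ), (j : ℕ) + 1 < n → (k : ℕ) + 1 < n →
      dbar n (Ltilde n α β k) j z = dbar n (Ltilde n α β j) k z := by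
  rw [Matrix.IsSymm.ext_iff]
  constructor
  · intro h j k z hj hk
    rw [dbar_Ltilde n α β hk.ne, dbar_Ltilde n α β hj.ne, h]
  · intro h j k
    by_cases hjk : (j : ℕ) + 1 < n ∧ (k : ℕ) + 1 < n
    · simpa only [dbar_Ltilde n α β hjk.1.ne, dbar_Ltilde n α β hjk.2.ne] using h k j 0 hjk.2 hjk.1
    · simp only [betaMatrix, Matrix.of_apply]
      rw [if_pos (by omega), if_pos (by omega)]

end ModelStructure

/-- a model structure `J` on `ℂⁿ` is integrable (its Nijenhuis tensor
vanishes identically) iff the compatibility conditions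
`∂L̃_{2n-1,k}/∂z̄^j = ∂L̃_{2n-1,j}/∂z̄^k` hold for all `1 ≤ j,k ≤ n-1`. -/
theorem stmt4 (n : ℕ) (hn : 1 ≤ n) (α β : Fin n → Fin n → ℂ) :
    (∀ (u v p : Fin n → ℂ), nijenhuis (modelJ n α β) u v p = 0) ↔
      (∀ (j k : Fin n) (z : Fin n → ℂ), (j : ℕ) + 1 < n → (k : ℕ) + 1 < n →
        dbar n (Ltilde n α β k) j z = dbar n (Ltilde n α β j) k z) := by
  rw [forall_nijenhuis_modelJ_eq_zero_iff n α β hn, Matrix.isSymm_toBilin'_iff_isSymm,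
    isSymm_betaMatrix_iff]
end

section
/- Let (M, J) be an almost complex manifold and N ⊂ M a totally real submanifold (TN ∩ J(TN) = {0}). Equip the tangent bundle TM with the complete lift J^c of J. Then TN is a totally real submanifold of (TM, J^c). -/
/-- let `(M,J)` be an almost complex manifold (realized on a real
normed space `E`, with `J` a smooth field of linear complex structures) and `N ⊂ M`
a totally real submanifold with tangent spaces `T z` (so `T z ∩ J(z)(T z) = {0}`).
Equip `TM = E × E` with the complete lift
`Jᶜ_{(z,t)}(u,v) = (J(z)u, (D_t J)(z)u + J(z)v)`. Then `TN` (whose tangent space at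
`(z,t)`, `z ∈ N`, `t ∈ T z`, is `T z × T z`) is totally real in `(TM, Jᶜ)`:
if `(u,v)` and `Jᶜ(u,v)` are both tangent to `TN`, then `(u,v) = 0`. -/
theorem stmt10 {E : Type*} [NormedAddCommGroup E] [NormedSpace ℝ E]
    (J : E → (E →L[ℝ] E)) (hJsm : ContDiff ℝ (⊤ : ℕ∞) J)
    (hJ2 : ∀ x v, J x (J x v) = -v)
    (N : Set E) (T : E → Submodule ℝ E)
    (htotreal : ∀ z ∈ N, ∀ u ∈ T z, J z u ∈ T z → u = 0) :
    ∀ z ∈ N, ∀ t ∈ T z, ∀ u ∈ T z, ∀ v ∈ T z,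
      J z u ∈ T z → (fderiv ℝ J z t) u + J z v ∈ T z → u = 0 ∧ v = 0 := by
  intro z hz t ht u hu v hv hJu hmix
  have hu0 : u = 0 := htotreal z hz u hu hJu
  subst hu0
  simp only [map_zero, zero_add] at hmix
  exact ⟨rfl, htotreal z hz v hv hmix⟩
end
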